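/- Let (A, I) be a Dorroh pair of algebras over a field k. Let I° be the finite dual of the algebra I, let I°_{(A)} = I_l° ∩ I_r° be the finite dual of I as an A-bimodule, and set I^d = I° ∩ I°_{(A)}. Then: (a) I^d is a subcoalgebra of I°, i.e. for every f ∈ I^d there exist finitely many f_i, g_i ∈ I^d with f(xy) = Σ f_i(x)g_i(y) for all x, y ∈ I; (b) I^d is an A°-subbicomodule of I°_{(A)}, i.e. the duals ρ_l, ρ_r of the A-actions map I^d into A°⊗I^d and I^d⊗A° respectively; (c) the coactions are compatible with the comultiplication Δ = m_I* of I^d: (Δ⊗id)ρ_r = (id⊗ρ_r)Δ, (id⊗Δ)ρ_l = (ρ_l⊗id)Δ, and (ρ_r⊗id)Δ = (id⊗ρ_l)Δ. Hence (A°, I^d) is a Dorroh pair of coalgebras. -/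

import Mathlib

/-!
The unitized Dorroh extension `D = k ⊕ A ⊕ I` acts on `I` from both sides, and the Dorroh axioms
say exactly that these are commuting actions of an associative product on `D`. Hence
`N = {m | f (d m e) = 0 for all d, e ∈ D}` is a `D`-ideal of `I` inside `ker f`, and every
functional vanishing on a `D`-ideal of finite codimension lies in `I^d`.

`N` has finite codimension in two steps. First, `Q = {m | f (D m) = 0}` has finite codimension,
because `f (d ·) = 0` for `d ∈ 0 ⊕ J_l ⊕ R`, with `R` a right ideal of finite codimension and
`J_l ⊆ A` an annihilator of finite codimension supplied by `f ∈ I° ∩ I_l°`. Second,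
`N = {m | m D ⊆ Q}`, and since the two actions commute, `m e ∈ Q` for all `m` as soon as
`e ∈ 0 ⊕ J_r ⊕ {y | f (I y) = 0}`, again a subspace of finite codimension.

Expanding `x` along a basis of `I/N` then produces the finite sums of (a) and (b).
-/

section

variable {k : Type} [Field k]

/-- The finite dual `B°` of a (not necessarily unital) algebra `B`. -/
def finDual (k : Type) [Field k] (B : Type) [NonUnitalRing B] [Module k B]
    [SMulCommClass k B B] [IsScalarTower k B B] : Set (Module.Dual k B) :=
  {f | ∃ R : Submodule k B, (∀ x ∈ R, ∀ b : B, x * b ∈ R) ∧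
        FiniteDimensional k (B ⧸ R) ∧ ∀ x ∈ R, f x = 0}

/-- The finite dual of a right module with action `μ`. -/
def finDualModR {A M : Type} [AddCommGroup A] [Module k A] [AddCommGroup M] [Module k M]
    (μ : M →ₗ[k] A →ₗ[k] M) : Set (Module.Dual k M) :=
  {f | ∃ N : Submodule k M, (∀ x ∈ N, ∀ a : A, μ x a ∈ N) ∧
        FiniteDimensional k (M ⧸ N) ∧ ∀ x ∈ N, f x = 0}

/-- The finite dual of a left module with action `lμ`. -/
def finDualModL {A M : Type} [AddCommGroup A] [Module k A] [AddCommGroup M] [Module k M]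
    (lμ : A →ₗ[k] M →ₗ[k] M) : Set (Module.Dual k M) :=
  {f | ∃ N : Submodule k M, (∀ x ∈ N, ∀ a : A, lμ a x ∈ N) ∧
        FiniteDimensional k (M ⧸ N) ∧ ∀ x ∈ N, f x = 0}

theorem finiteDimensional_quotient_ker {M V : Type} [AddCommGroup M] [Module k M]
    [AddCommGroup V] [Module k V] [FiniteDimensional k V] (g : M →ₗ[k] V) :
    FiniteDimensional k (M ⧸ LinearMap.ker g) :=
  g.quotKerEquivRange.symm.finiteDimensional

theorem finiteDimensional_quotient_ker_of_forall_eq_zero {M X V : Type}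
    [AddCommGroup M] [Module k M] [AddCommGroup X] [Module k X]
    [AddCommGroup V] [Module k V] [FiniteDimensional k V]
    (Ψ : M →ₗ[k] X →ₗ[k] V) (J : Submodule k X) [FiniteDimensional k (X ⧸ J)]
    (hJ : ∀ x ∈ J, ∀ m, Ψ m x = 0) : FiniteDimensional k (M ⧸ LinearMap.ker Ψ) := by
  have hrange : LinearMap.range Ψ ≤ LinearMap.range (LinearMap.lcomp k V J.mkQ) := by
    rintro _ ⟨m, rfl⟩
    have hm : J ≤ LinearMap.ker (Ψ m) := fun x hx => hJ x hx m
    exact ⟨J.liftQ (Ψ m) hm, J.liftQ_mkQ _ hm⟩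
  have : FiniteDimensional k (LinearMap.range Ψ) := Submodule.finiteDimensional_of_le hrange
  exact Ψ.quotKerEquivRange.symm.finiteDimensional

theorem finiteDimensional_quotient_ker_compr₂_mkQ {M X : Type}
    [AddCommGroup M] [Module k M] [AddCommGroup X] [Module k X]
    (φ : X →ₗ[k] M →ₗ[k] M) (N : Submodule k M) [FiniteDimensional k (M ⧸ N)]
    (hN : ∀ x, ∀ m ∈ N, φ x m ∈ N) :
    FiniteDimensional k (X ⧸ LinearMap.ker (φ.compr₂ N.mkQ)) :=
  finiteDimensional_quotient_ker_of_forall_eq_zero _ N fun m hm x => by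
    simpa [Submodule.Quotient.mk_eq_zero] using hN x m hm

theorem mem_ker_compr₂ {X Y M V : Type} [AddCommGroup X] [Module k X] [AddCommGroup Y]
    [Module k Y] [AddCommGroup M] [Module k M] [AddCommGroup V] [Module k V]
    {φ : X →ₗ[k] Y →ₗ[k] M} {g : M →ₗ[k] V} {x : X} :
    x ∈ LinearMap.ker (φ.compr₂ g) ↔ ∀ y, g (φ x y) = 0 := by
  simp [LinearMap.ext_iff]

theorem mem_ker_compr₂_mkQ {X Y M : Type} [AddCommGroup X] [Module k X] [AddCommGroup Y]
    [Module k Y] [AddCommGroup M] [Module k M]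
    {φ : X →ₗ[k] Y →ₗ[k] M} {N : Submodule k M} {x : X} :
    x ∈ LinearMap.ker (φ.compr₂ N.mkQ) ↔ ∀ y, φ x y ∈ N := by
  rw [mem_ker_compr₂]
  simp only [Submodule.mkQ_apply, Submodule.Quotient.mk_eq_zero]

theorem exists_sum_mul_of_forall_eq_zero {M Y : Type} [AddCommGroup M] [Module k M]
    [AddCommGroup Y] [Module k Y] (N : Submodule k M) [FiniteDimensional k (M ⧸ N)]
    (β : M →ₗ[k] Y →ₗ[k] k) (hβ : ∀ x ∈ N, ∀ y, β x y = 0) :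
    ∃ (n : ℕ) (c : Fin n → Module.Dual k M) (t : Fin n → M),
      (∀ i, ∀ x ∈ N, c i x = 0) ∧ ∀ x y, β x y = ∑ i, c i x * β (t i) y := by
  let b := Module.finBasis k (M ⧸ N)
  choose t ht using fun i => N.mkQ_surjective (b i)
  have hN : N ≤ LinearMap.ker β := fun x hx => LinearMap.ext (hβ x hx)
  refine ⟨_, fun i => b.coord i ∘ₗ N.mkQ, t, fun i x hx => ?_, fun x y => ?_⟩
  · simp [(Submodule.Quotient.mk_eq_zero N).mpr hx]
  · calc β x y = N.liftQ β hN (∑ i, b.repr (N.mkQ x) i • b i) y := by rw [b.sum_repr]; rfl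
      _ = ∑ i, b.coord i (N.mkQ x) * β (t i) y := by simp [← ht]

theorem comp_flip_mem_finDual {A M : Type} [NonUnitalRing A] [Module k A]
    [SMulCommClass k A A] [IsScalarTower k A A] [AddCommGroup M] [Module k M]
    (φ : A →ₗ[k] M →ₗ[k] M) (N : Submodule k M) [FiniteDimensional k (M ⧸ N)]
    (hN : ∀ a, ∀ x ∈ N, φ a x ∈ N)
    (hmul : ∀ a, (∀ x, φ a x ∈ N) → ∀ b x, φ (a * b) x ∈ N)
    {g : Module.Dual k M} (hg : ∀ x ∈ N, g x = 0) (t : M) :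
    g ∘ₗ φ.flip t ∈ finDual k A :=
  ⟨LinearMap.ker (φ.compr₂ N.mkQ),
    fun a ha b => mem_ker_compr₂_mkQ.mpr (hmul a (mem_ker_compr₂_mkQ.mp ha) b),
    finiteDimensional_quotient_ker_compr₂_mkQ φ N hN,
    fun _ ha => hg _ (mem_ker_compr₂_mkQ.mp ha t)⟩

section Dorroh

variable {A I : Type}
  [NonUnitalRing A] [Module k A]
  [NonUnitalRing I] [Module k I] [SMulCommClass k I I] [IsScalarTower k I I]
  (l : A →ₗ[k] I →ₗ[k] I) (r : I →ₗ[k] A →ₗ[k] I)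

def dorrohLeft : k × A × I →ₗ[k] Module.End k I :=
  (LinearMap.toSpanSingleton k _ 1).coprod (l.coprod (LinearMap.mul k I))

def dorrohRight : k × A × I →ₗ[k] Module.End k I :=
  (LinearMap.toSpanSingleton k _ 1).coprod (r.flip.coprod (LinearMap.mul k I).flip)

@[simp]
theorem dorrohLeft_apply (c : k) (a : A) (x z : I) :
    dorrohLeft l (c, a, x) z = c • z + l a z + x * z := by
  simp [dorrohLeft, add_assoc]

@[simp]
theorem dorrohRight_apply (c : k) (a : A) (x z : I) :
    dorrohRight r (c, a, x) z = c • z + r z a + z * x := by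
  simp [dorrohRight, add_assoc]

def dorrohMul (d e : k × A × I) : k × A × I :=
  (d.1 * e.1, d.1 • e.2.1 + e.1 • d.2.1 + d.2.1 * e.2.1,
    d.1 • e.2.2 + e.1 • d.2.2 + l d.2.1 e.2.2 + r d.2.2 e.2.1 + d.2.2 * e.2.2)

variable {l r}

theorem dorrohLeft_dorrohMul
    (h1 : ∀ (a b : A) (x : I), l (a * b) x = l a (l b x))
    (h4 : ∀ (a : A) (x y : I), l a (x * y) = l a x * y)
    (h5 : ∀ (x : I) (a : A) (y : I), r x a * y = x * l a y) (d e : k × A × I) :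
    dorrohLeft l (dorrohMul l r d e) = dorrohLeft l d * dorrohLeft l e := by
  obtain ⟨c, a, x⟩ := d
  obtain ⟨c', b, y⟩ := e
  ext z
  simp [dorrohMul, h1, h4, h5, add_mul, mul_add, smul_add, smul_mul_assoc, mul_smul_comm,
    mul_assoc, mul_smul, smul_comm c c']
  abel

theorem dorrohRight_dorrohMul
    (h2 : ∀ (x : I) (a b : A), r x (a * b) = r (r x a) b)
    (h5 : ∀ (x : I) (a : A) (y : I), r x a * y = x * l a y)
    (h6 : ∀ (x y : I) (a : A), r (x * y) a = x * r y a) (d e : k × A × I) :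
    dorrohRight r (dorrohMul l r d e) = dorrohRight r e * dorrohRight r d := by
  obtain ⟨c, a, x⟩ := d
  obtain ⟨c', b, y⟩ := e
  ext z
  simp [dorrohMul, h2, h5, h6, add_mul, mul_add, smul_add, smul_mul_assoc, mul_smul_comm,
    mul_assoc, mul_smul, smul_comm c c']
  abel

theorem commute_dorrohLeft_dorrohRight
    (h3 : ∀ (a : A) (x : I) (b : A), r (l a x) b = l a (r x b))
    (h4 : ∀ (a : A) (x y : I), l a (x * y) = l a x * y)
    (h6 : ∀ (x y : I) (a : A), r (x * y) a = x * r y a) (d e : k × A × I) :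
    Commute (dorrohLeft l d) (dorrohRight r e) := by
  obtain ⟨c, a, x⟩ := d
  obtain ⟨c', b, y⟩ := e
  ext z
  simp [h3, h4, h6, add_mul, mul_add, smul_add, smul_mul_assoc, mul_smul_comm,
    mul_assoc, smul_comm c c']
  abel

variable (l r) in
structure IsDorrohIdeal (N : Submodule k I) : Prop where
  mul_mem_right : ∀ x ∈ N, ∀ y : I, x * y ∈ N
  mul_mem_left : ∀ x ∈ N, ∀ y : I, y * x ∈ N
  left_mem : ∀ x ∈ N, ∀ a : A, l a x ∈ N
  right_mem : ∀ x ∈ N, ∀ a : A, r x a ∈ N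

theorem IsDorrohIdeal.mem_finDual_inter {N : Submodule k I} (hN : IsDorrohIdeal l r N)
    [FiniteDimensional k (I ⧸ N)] {g : Module.Dual k I} (hg : ∀ x ∈ N, g x = 0) :
    g ∈ finDual k I ∩ (finDualModL l ∩ finDualModR r) :=
  ⟨⟨N, hN.mul_mem_right, ‹_›, hg⟩, ⟨N, hN.left_mem, ‹_›, hg⟩,
    ⟨N, hN.right_mem, ‹_›, hg⟩⟩

variable (l r) in
def dorrohCore (f : Module.Dual k I) : Submodule k I :=
  ⨅ d, ⨅ e, LinearMap.ker (f ∘ₗ dorrohLeft l d ∘ₗ dorrohRight r e)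

theorem mem_dorrohCore {f : Module.Dual k I} {m : I} :
    m ∈ dorrohCore l r f ↔ ∀ d e, f (dorrohLeft l d (dorrohRight r e m)) = 0 := by
  simp [dorrohCore, Submodule.mem_iInf]

theorem apply_eq_zero_of_mem_dorrohCore {f : Module.Dual k I} {x : I}
    (hx : x ∈ dorrohCore l r f) : f x = 0 := by
  simpa using mem_dorrohCore.mp hx (1, 0, 0) (1, 0, 0)

theorem isDorrohIdeal_dorrohCore
    (h1 : ∀ (a b : A) (x : I), l (a * b) x = l a (l b x))
    (h2 : ∀ (x : I) (a b : A), r x (a * b) = r (r x a) b)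
    (h3 : ∀ (a : A) (x : I) (b : A), r (l a x) b = l a (r x b))
    (h4 : ∀ (a : A) (x y : I), l a (x * y) = l a x * y)
    (h5 : ∀ (x : I) (a : A) (y : I), r x a * y = x * l a y)
    (h6 : ∀ (x y : I) (a : A), r (x * y) a = x * r y a) (f : Module.Dual k I) :
    IsDorrohIdeal l r (dorrohCore l r f) := by
  have left_mem : ∀ m ∈ dorrohCore l r f, ∀ d', dorrohLeft l d' m ∈ dorrohCore l r f := by
    intro m hm d'
    refine mem_dorrohCore.mpr fun d e => ?_
    calc f (dorrohLeft l d (dorrohRight r e (dorrohLeft l d' m)))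
        = f (dorrohLeft l (dorrohMul l r d d') (dorrohRight r e m)) := by
          rw [dorrohLeft_dorrohMul h1 h4 h5, Module.End.mul_apply,
            ← Module.End.mul_apply (dorrohRight r e),
            ← (commute_dorrohLeft_dorrohRight h3 h4 h6 d' e).eq, Module.End.mul_apply]
      _ = 0 := mem_dorrohCore.mp hm _ e
  have right_mem : ∀ m ∈ dorrohCore l r f, ∀ e', dorrohRight r e' m ∈ dorrohCore l r f := by
    intro m hm e'
    refine mem_dorrohCore.mpr fun d e => ?_
    rw [← Module.End.mul_apply (dorrohRight r e), ← dorrohRight_dorrohMul (l := l) h2 h5 h6]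
    exact mem_dorrohCore.mp hm d _
  refine ⟨fun x hx y => ?_, fun x hx y => ?_, fun x hx a => ?_, fun x hx a => ?_⟩
  · simpa using right_mem x hx (0, 0, y)
  · simpa using left_mem x hx (0, 0, y)
  · simpa using left_mem x hx (0, a, 0)
  · simpa using right_mem x hx (0, a, 0)

theorem finiteDimensional_quotient_ker_dorrohLeft {f : Module.Dual k I}
    (hf : f ∈ finDual k I ∩ finDualModL l) :
    FiniteDimensional k (I ⧸ LinearMap.ker ((dorrohLeft l).flip.compr₂ f)) := by
  obtain ⟨⟨R, hR, hRfd, hfR⟩, ⟨Nl, hNl, hNlfd, hfNl⟩⟩ := hf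
  set Jl := LinearMap.ker (l.compr₂ Nl.mkQ)
  have : FiniteDimensional k (A ⧸ Jl) :=
    finiteDimensional_quotient_ker_compr₂_mkQ l Nl fun a x hx => hNl x hx a
  set J := LinearMap.ker ((LinearMap.id : k →ₗ[k] k).prodMap (Jl.mkQ.prodMap R.mkQ))
  have : FiniteDimensional k ((k × A × I) ⧸ J) := finiteDimensional_quotient_ker _
  refine finiteDimensional_quotient_ker_of_forall_eq_zero _ J fun d hd m => ?_
  obtain ⟨c, a, x⟩ := d
  obtain ⟨rfl, ha, hx⟩ : c = 0 ∧ a ∈ Jl ∧ x ∈ R := by simpa [J] using hd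
  simp [hfNl _ (mem_ker_compr₂_mkQ.mp ha m), hfR _ (hR x hx m)]

theorem finiteDimensional_quotient_dorrohCore
    (h3 : ∀ (a : A) (x : I) (b : A), r (l a x) b = l a (r x b))
    (h4 : ∀ (a : A) (x y : I), l a (x * y) = l a x * y)
    (h6 : ∀ (x y : I) (a : A), r (x * y) a = x * r y a) {f : Module.Dual k I}
    (hf : f ∈ finDual k I ∩ (finDualModL l ∩ finDualModR r)) :
    FiniteDimensional k (I ⧸ dorrohCore l r f) := by
  set Q := LinearMap.ker ((dorrohLeft l).flip.compr₂ f)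
  have : FiniteDimensional k (I ⧸ Q) :=
    finiteDimensional_quotient_ker_dorrohLeft ⟨hf.1, hf.2.1⟩
  obtain ⟨⟨R, hR, hRfd, hfR⟩, -, ⟨Nr, hNr, hNrfd, hfNr⟩⟩ := hf
  set Jr := LinearMap.ker (r.flip.compr₂ Nr.mkQ)
  have : FiniteDimensional k (A ⧸ Jr) :=
    finiteDimensional_quotient_ker_compr₂_mkQ r.flip Nr fun a x hx => hNr x hx a
  set K := LinearMap.ker ((LinearMap.mul k I).flip.compr₂ f)
  have : FiniteDimensional k (I ⧸ K) :=
    finiteDimensional_quotient_ker_of_forall_eq_zero _ R fun x hx y => by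
      simpa using hfR _ (hR x hx y)
  set J := LinearMap.ker ((LinearMap.id : k →ₗ[k] k).prodMap (Jr.mkQ.prodMap K.mkQ))
  have : FiniteDimensional k ((k × A × I) ⧸ J) := finiteDimensional_quotient_ker _
  have hcore : dorrohCore l r f = LinearMap.ker ((dorrohRight r).flip.compr₂ Q.mkQ) := by
    ext m
    rw [mem_dorrohCore, mem_ker_compr₂_mkQ]
    simp only [LinearMap.flip_apply, Q, mem_ker_compr₂]
    exact forall_comm
  rw [hcore]
  refine finiteDimensional_quotient_ker_of_forall_eq_zero _ J fun e he m => ?_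
  obtain ⟨c, b, y⟩ := e
  obtain ⟨rfl, hb, hy⟩ : c = 0 ∧ b ∈ Jr ∧ y ∈ K := by simpa [J] using he
  rw [LinearMap.compr₂_apply, Submodule.mkQ_apply, Submodule.Quotient.mk_eq_zero]
  refine mem_ker_compr₂.mpr fun d => ?_
  rw [LinearMap.flip_apply, LinearMap.flip_apply, ← Module.End.mul_apply,
    (commute_dorrohLeft_dorrohRight h3 h4 h6 d _).eq, Module.End.mul_apply, dorrohRight_apply,
    zero_smul, zero_add, map_add]
  have hr : f (r (dorrohLeft l d m) b) = 0 := hfNr _ (mem_ker_compr₂_mkQ.mp hb _)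
  have hm : f (dorrohLeft l d m * y) = 0 := mem_ker_compr₂.mp hy _
  rw [hr, hm, add_zero]

end Dorroh

/-- **Lemma 3.11.** Let `(A, I)` be a Dorroh pair of algebras,
`I°` the finite dual of the algebra `I`, `I°_{(A)} = I_l° ∩ I_r°` the finite dual of the
`A`-bimodule `I`, and `I^d = I° ∩ I°_{(A)}`. Then
(a) `I^d` is a subcoalgebra of `I°`;
(b) `I^d` is an `A°`-subbicomodule of `I°_{(A)}`;
(c) the coactions of `I^d` are compatible with its comultiplication, so that
`(A°, I^d)` is a Dorroh pair of coalgebras. -/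
theorem dorroh_finDual_pair {A I : Type}
    [NonUnitalRing A] [Module k A] [SMulCommClass k A A] [IsScalarTower k A A]
    [NonUnitalRing I] [Module k I] [SMulCommClass k I I] [IsScalarTower k I I]
    (l : A →ₗ[k] I →ₗ[k] I) (r : I →ₗ[k] A →ₗ[k] I)
    (h1 : ∀ (a b : A) (x : I), l (a * b) x = l a (l b x))
    (h2 : ∀ (x : I) (a b : A), r x (a * b) = r (r x a) b)
    (h3 : ∀ (a : A) (x : I) (b : A), r (l a x) b = l a (r x b))
    (h4 : ∀ (a : A) (x y : I), l a (x * y) = l a x * y)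
    (h5 : ∀ (x : I) (a : A) (y : I), r x a * y = x * l a y)
    (h6 : ∀ (x y : I) (a : A), r (x * y) a = x * r y a)
    (f : Module.Dual k I)
    (hf : f ∈ finDual k I ∩ (finDualModL l ∩ finDualModR r)) :
    -- (a) `Δ(I^d) ⊆ I^d ⊗ I^d`
    (∃ (n : ℕ) (g h : Fin n → Module.Dual k I),
      (∀ i, g i ∈ finDual k I ∩ (finDualModL l ∩ finDualModR r) ∧
            h i ∈ finDual k I ∩ (finDualModL l ∩ finDualModR r)) ∧
      ∀ x y : I, f (x * y) = ∑ i, g i x * h i y) ∧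
    -- (b) `ρ_l(I^d) ⊆ A° ⊗ I^d` and `ρ_r(I^d) ⊆ I^d ⊗ A°`
    (∃ (m : ℕ) (u : Fin m → Module.Dual k A) (v : Fin m → Module.Dual k I),
      (∀ i, u i ∈ finDual k A ∧
            v i ∈ finDual k I ∩ (finDualModL l ∩ finDualModR r)) ∧
      ∀ (a : A) (x : I), f (l a x) = ∑ i, u i a * v i x) ∧
    (∃ (s : ℕ) (w : Fin s → Module.Dual k I) (z : Fin s → Module.Dual k A),
      (∀ i, w i ∈ finDual k I ∩ (finDualModL l ∩ finDualModR r) ∧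
            z i ∈ finDual k A) ∧
      ∀ (x : I) (a : A), f (r x a) = ∑ i, w i x * z i a) ∧
    -- (c) compatibility of the coactions with the comultiplication:
    -- `(Δ⊗1)ρ_r = (1⊗ρ_r)Δ`, `(1⊗Δ)ρ_l = (ρ_l⊗1)Δ`, `(ρ_r⊗1)Δ = (1⊗ρ_l)Δ`
    ((∀ (x y : I) (a : A), f (r (x * y) a) = f (x * r y a)) ∧
     (∀ (a : A) (x y : I), f (l a (x * y)) = f (l a x * y)) ∧
     (∀ (x : I) (a : A) (y : I), f (r x a * y) = f (x * l a y))) := by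
  set N := dorrohCore l r f
  have hN : IsDorrohIdeal l r N := isDorrohIdeal_dorrohCore h1 h2 h3 h4 h5 h6 f
  have : FiniteDimensional k (I ⧸ N) := finiteDimensional_quotient_dorrohCore h3 h4 h6 hf
  have hfN : ∀ x ∈ N, f x = 0 := fun _ => apply_eq_zero_of_mem_dorrohCore
  refine ⟨?_, ?_, ?_, fun x y a => by rw [h6], fun a x y => by rw [h4], fun x a y => by rw [h5]⟩
  · obtain ⟨n, c, t, hc, hsum⟩ := exists_sum_mul_of_forall_eq_zero N
      ((LinearMap.mul k I).compr₂ f) fun x hx y => hfN _ (hN.mul_mem_right x hx y)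
    refine ⟨n, c, fun i => f ∘ₗ LinearMap.mul k I (t i), fun i =>
      ⟨hN.mem_finDual_inter (hc i),
        hN.mem_finDual_inter fun x hx => hfN _ (hN.mul_mem_left x hx _)⟩,
      fun x y => ?_⟩
    simpa using hsum x y
  · obtain ⟨n, c, t, hc, hsum⟩ := exists_sum_mul_of_forall_eq_zero N
      (l.flip.compr₂ f) fun x hx a => hfN _ (hN.left_mem x hx a)
    refine ⟨n, fun i => f ∘ₗ l.flip (t i), c, fun i => ⟨comp_flip_mem_finDual l N
      (fun a x hx => hN.left_mem x hx a) (fun a ha b x => h1 a b x ▸ ha _) hfN (t i),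
      hN.mem_finDual_inter (hc i)⟩, fun a x => ?_⟩
    simpa [mul_comm] using hsum x a
  · obtain ⟨n, c, t, hc, hsum⟩ := exists_sum_mul_of_forall_eq_zero N
      (r.compr₂ f) fun x hx a => hfN _ (hN.right_mem x hx a)
    refine ⟨n, c, fun i => f ∘ₗ r (t i), fun i => ⟨hN.mem_finDual_inter (hc i),
      comp_flip_mem_finDual r.flip N (fun a x hx => hN.right_mem x hx a)
        (fun a ha b x => h2 x a b ▸ hN.right_mem _ (ha x) b) hfN (t i)⟩, fun x a => ?_⟩
    simpa using hsum x a

end
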